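/- Let M, M' be elements of an associative (not necessarily commutative) ring. Define recursively D₀(M', M) = 0 and D_r(M', M) = [M', M^{r−1}] + M·D_{r−1}(M', M) + [M', D_{r−1}(M', M)] for r ≥ 1, where [A,B] = AB − BA. Then for every integer j ≥ 0: (M + M')^j = ∑_{ℓ=0}^{j} C(j, ℓ) (M^ℓ + D_ℓ(M', M)) M'^{\,j−ℓ}. -/

import Mathlib

/-- The `r`-th order essential non-commutative part `D_r(M', M)`, defined via the
recursion `D₀ = 0`, `D_r = [M', M^{r-1}] + M · D_{r-1} + [M', D_{r-1}]`. -/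
def ncPart {R : Type*} [Ring R] (M' M : R) : ℕ → R
  | 0 => 0
  | r + 1 =>
      (M' * M ^ r - M ^ r * M') + M * ncPart M' M r +
        (M' * ncPart M' M r - ncPart M' M r * M')

/-!
Put `E_ℓ := M^ℓ + D_ℓ(M', M)`. The recursion for `D` says exactly that
`E_{ℓ+1} = (M + M') E_ℓ - E_ℓ M'`, so `E_ℓ = T^ℓ 1` for the operator `T x = (M + M') x - x M'`.
Left multiplication by `M + M'` is `T` plus right multiplication by `M'`, and these two operators
commute, so expanding `(T + R_{M'})^j` by the binomial theorem in `Module.End ℤ R` and applying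
it to `1` gives the identity.
-/

open Finset LinearMap

section

variable {R : Type*} [Ring R]

theorem pow_mul_eq_sum_choose_nsmul (a b x : R) (j : ℕ) :
    a ^ j * x = ∑ ℓ ∈ range (j + 1),
      j.choose ℓ • (((mulLeft ℤ a - mulRight ℤ b) ^ ℓ) x * b ^ (j - ℓ)) := by
  set T := mulLeft ℤ a - mulRight ℤ b
  have hT : Commute T (mulRight ℤ b) :=
    (commute_mulLeft_right a b).sub_left (Commute.refl _)
  have hsplit : mulLeft ℤ a = T + mulRight ℤ b := (sub_add_cancel _ _).symm
  calc a ^ j * x = (mulLeft ℤ a ^ j) x := by rw [pow_mulLeft, mulLeft_apply]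
    _ = ∑ ℓ ∈ range (j + 1), (T ^ ℓ * mulRight ℤ b ^ (j - ℓ) * (j.choose ℓ : Module.End ℤ R)) x := by
      rw [hsplit, hT.add_pow, LinearMap.sum_apply]
    _ = _ := by
      refine sum_congr rfl fun ℓ _ => ?_
      rw [(hT.pow_pow ℓ (j - ℓ)).eq, Module.End.mul_apply, Module.End.natCast_apply, map_nsmul,
        Module.End.mul_apply, pow_mulRight, mulRight_apply]

theorem pow_add_ncPart_succ (M' M : R) (r : ℕ) :
    M ^ (r + 1) + ncPart M' M (r + 1) =
      (M + M') * (M ^ r + ncPart M' M r) - (M ^ r + ncPart M' M r) * M' := by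
  rw [ncPart, pow_succ']
  noncomm_ring

theorem mulLeft_add_sub_mulRight_pow_apply_one (M' M : R) (ℓ : ℕ) :
    ((mulLeft ℤ (M + M') - mulRight ℤ M') ^ ℓ) 1 = M ^ ℓ + ncPart M' M ℓ := by
  induction ℓ with
  | zero => simp [ncPart]
  | succ ℓ ih =>
    rw [pow_succ', Module.End.mul_apply, ih, pow_add_ncPart_succ, LinearMap.sub_apply, mulLeft_apply,
      mulRight_apply]

end

theorem noncommutative_binomial_identity {R : Type*} [Ring R] (M M' : R) (j : ℕ) :
    (M + M') ^ j =
      ∑ ℓ ∈ Finset.range (j + 1),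
        j.choose ℓ • ((M ^ ℓ + ncPart M' M ℓ) * M' ^ (j - ℓ)) := by
  simpa only [mul_one, mulLeft_add_sub_mulRight_pow_apply_one] using
    pow_mul_eq_sum_choose_nsmul (M + M') M' 1 j
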